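/- The unique negative solution x* of the equation -xΦ(x) = φ(x)(1 - 2Φ(x)) satisfies x* ∈ (-0.85, -0.84), and consequently q* = Φ(x*) ∈ (0.197, 0.199). -/

import Mathlib

/-!
Write the equation as `G x = 0` with `G x = Φ x - φ x / (2 φ x - x)` (`cdfGap`), the denominator
being positive for `x ≤ 0`. Since `φ' = -x φ`, the derivative `G' = φ K / (2 φ - x)²` with
`K = (2 φ - x)² - (1 + x²)` (`cdfGapSign`) no longer involves `Φ`, and `K' = 4 φ (x² - 2 x φ - 1)`,
whose second factor decreases on `x ≤ 0` because `|x| φ x ≤ 1`. So `K` first increases and then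
decreases, hence `G' ≥ 0` exactly on an interval of `(-∞, 0]`. As `G` tends to `0` at `-∞` and
vanishes at `0`, the mean value theorem confines every negative zero of `G` to `(c, d)` as soon as
`G c < 0 < G d`. A six-term Taylor expansion of `exp (-t²/2)` gives `G (-0.85) < 0 < G (-0.847)`,
and `Φ` is monotone.
-/

open MeasureTheory Real

/-- Standard normal density. -/
noncomputable def stdPdf (x : ℝ) : ℝ := (Real.sqrt (2 * Real.pi))⁻¹ * Real.exp (-x ^ 2 / 2)

/-- Standard normal distribution function. -/
noncomputable def stdCdf (x : ℝ) : ℝ := ∫ t in Set.Iic x, stdPdf t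

open Filter Topology Set

section MeanValue

variable {f f' : ℝ → ℝ}

theorem exists_hasDerivAt_eq_slope_of_forall_Icc {a b : ℝ} (hab : a < b)
    (hf : ∀ y ∈ Icc a b, HasDerivAt f (f' y) y) :
    ∃ c ∈ Ioo a b, f' c = (f b - f a) / (b - a) :=
  exists_hasDerivAt_eq_slope f f' hab (fun y hy ↦ (hf y hy).continuousAt.continuousWithinAt)
    fun y hy ↦ hf y (Ioo_subset_Icc_self hy)

theorem quasiconcaveOn_of_hasDerivAt {s : Set ℝ} (hs : Convex ℝ s)
    (hf : ∀ x ∈ s, HasDerivAt f (f' x) x)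
    (hf' : ∀ x ∈ s, ∀ y ∈ s, x < y → 0 < f' y → 0 ≤ f' x) : QuasiconcaveOn ℝ s f := by
  intro r
  refine Set.OrdConnected.convex ⟨fun a ha b hb y hy ↦ ⟨hs.ordConnected.out ha.1 hb.1 hy, ?_⟩⟩
  by_contra! hyr
  have hay : a < y := lt_of_le_of_ne hy.1 (by rintro rfl; exact hyr.not_ge ha.2)
  have hyb : y < b := lt_of_le_of_ne hy.2 (by rintro rfl; exact hyr.not_ge hb.2)
  have hsub : Icc a b ⊆ s := hs.ordConnected.out ha.1 hb.1
  obtain ⟨ξ, hξ, hξf⟩ := exists_hasDerivAt_eq_slope_of_forall_Icc hay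
    fun z hz ↦ hf z (hsub (Icc_subset_Icc_right hyb.le hz))
  obtain ⟨η, hη, hηf⟩ := exists_hasDerivAt_eq_slope_of_forall_Icc hyb
    fun z hz ↦ hf z (hsub (Icc_subset_Icc_left hay.le hz))
  have hη_pos : 0 < f' η := hηf ▸ div_pos (by linarith [hb.2]) (by linarith)
  have hξ_neg : f' ξ < 0 := hξf ▸ div_neg_of_neg_of_pos (by linarith [ha.2]) (by linarith)
  exact hξ_neg.not_ge <| hf' ξ (hsub ⟨hξ.1.le, by linarith [hξ.2]⟩) η
    (hsub ⟨by linarith [hη.1], hη.2.le⟩) (hξ.2.trans hη.1) hη_pos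

theorem exists_lt_hasDerivAt_nonneg_of_tendsto_atBot {L x : ℝ}
    (hf : ∀ y ≤ x, HasDerivAt f (f' y) y) (hlim : Tendsto f atBot (𝓝 L)) (hx : L ≤ f x) :
    ∃ η < x, 0 ≤ f' η := by
  have hf_Icc : ∀ a b, b ≤ x → ∀ y ∈ Icc a b, HasDerivAt f (f' y) y :=
    fun a b hb y hy ↦ hf y (hy.2.trans hb)
  rcases le_or_gt (f (x - 1)) (f x) with h | h
  · obtain ⟨η, hη, hηf⟩ := exists_hasDerivAt_eq_slope_of_forall_Icc (sub_one_lt x)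
      (hf_Icc _ _ le_rfl)
    exact ⟨η, hη.2, hηf ▸ div_nonneg (sub_nonneg.2 h) (by linarith)⟩
  · obtain ⟨y, hfy, hy⟩ :=
      ((hlim.eventually (gt_mem_nhds (hx.trans_lt h))).and (eventually_lt_atBot (x - 1))).exists
    obtain ⟨η, hη, hηf⟩ := exists_hasDerivAt_eq_slope_of_forall_Icc hy (hf_Icc _ _ (by linarith))
    exact ⟨η, by linarith [hη.2], hηf ▸ div_nonneg (by linarith) (by linarith)⟩

theorem mem_Ioo_of_eq_zero_of_convex_setOf_deriv_nonneg (hf : ∀ y ≤ 0, HasDerivAt f (f' y) y)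
    (hconv : Convex ℝ {y ∈ Iic (0 : ℝ) | 0 ≤ f' y}) (hlim : Tendsto f atBot (𝓝 0))
    (hf0 : f 0 = 0) {c d x : ℝ} (hc : c < 0) (hfc : f c < 0) (hfd : 0 < f d) (hx : x < 0)
    (hfx : f x = 0) : x ∈ Ioo c d := by
  have hsign : ∀ p q r, p < q → q < r → r ≤ 0 → 0 ≤ f' p → 0 ≤ f' r → 0 ≤ f' q :=
    fun p q r hpq hqr hr hp hr' ↦ (hconv.ordConnected.out ⟨(hpq.trans hqr).le.trans hr, hp⟩
      ⟨hr, hr'⟩ ⟨hpq.le, hqr.le⟩).2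
  have hf_Icc : ∀ a b, b ≤ 0 → ∀ y ∈ Icc a b, HasDerivAt f (f' y) y :=
    fun a b hb y hy ↦ hf y (hy.2.trans hb)
  -- A zero outside `(c, d)` yields points `η < ξ < ζ` with `f' η ≥ 0 > f' ξ` and `f' ζ ≥ 0`.
  constructor
  · by_contra! hxc
    have hxc' : x < c := lt_of_le_of_ne hxc (by rintro rfl; linarith)
    obtain ⟨η, hηx, hη⟩ := exists_lt_hasDerivAt_nonneg_of_tendsto_atBot
      (fun y hy ↦ hf y (hy.trans hx.le)) hlim hfx.ge
    obtain ⟨ξ, hξ, hξf⟩ := exists_hasDerivAt_eq_slope_of_forall_Icc hxc' (hf_Icc _ _ hc.le)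
    obtain ⟨ζ, hζ, hζf⟩ := exists_hasDerivAt_eq_slope_of_forall_Icc hc (hf_Icc _ _ le_rfl)
    have hξ_neg : f' ξ < 0 := hξf ▸ div_neg_of_neg_of_pos (by linarith) (by linarith)
    have hζ_pos : 0 < f' ζ := hζf ▸ div_pos (by linarith) (by linarith)
    exact hξ_neg.not_ge (hsign η ξ ζ (hηx.trans hξ.1) (hξ.2.trans hζ.1) hζ.2.le hη hζ_pos.le)
  · by_contra! hdx
    have hdx' : d < x := lt_of_le_of_ne hdx (by rintro rfl; linarith)
    obtain ⟨η, hηd, hη⟩ := exists_lt_hasDerivAt_nonneg_of_tendsto_atBot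
      (fun y hy ↦ hf y (hy.trans (hdx'.trans hx).le)) hlim hfd.le
    obtain ⟨ξ, hξ, hξf⟩ := exists_hasDerivAt_eq_slope_of_forall_Icc hdx' (hf_Icc _ _ hx.le)
    obtain ⟨ζ, hζ, hζf⟩ := exists_hasDerivAt_eq_slope_of_forall_Icc hx (hf_Icc _ _ le_rfl)
    have hξ_neg : f' ξ < 0 := hξf ▸ div_neg_of_neg_of_pos (by linarith) (by linarith)
    have hζ_zero : f' ζ = 0 := by rw [hζf, hf0, hfx, sub_self, zero_div]
    exact hξ_neg.not_ge
      (hsign η ξ ζ (hηd.trans hξ.1) (hξ.2.trans hζ.1) hζ.2.le hη hζ_zero.ge)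

end MeanValue

theorem sqrt_two_pi_mul_stdPdf (x : ℝ) : √(2 * π) * stdPdf x = exp (-x ^ 2 / 2) := by
  rw [stdPdf, ← mul_assoc, mul_inv_cancel₀ (by positivity), one_mul]

theorem stdPdf_pos (x : ℝ) : 0 < stdPdf x := by
  unfold stdPdf; positivity

theorem continuous_stdPdf : Continuous stdPdf := by
  unfold stdPdf; fun_prop

theorem integrable_stdPdf : Integrable stdPdf := by
  have : Integrable fun x : ℝ ↦ exp (-(1 / 2) * x ^ 2) := integrable_exp_neg_mul_sq (by norm_num)
  refine (this.const_mul (√(2 * π))⁻¹).congr (Eventually.of_forall fun x ↦ ?_)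
  simp only [stdPdf]; ring_nf

theorem hasDerivAt_stdPdf (x : ℝ) : HasDerivAt stdPdf (-x * stdPdf x) x := by
  have h : HasDerivAt (fun y : ℝ ↦ -y ^ 2 / 2) (-x) x :=
    ((hasDerivAt_pow 2 x).neg.div_const 2).congr_deriv (by push_cast; ring)
  exact (h.exp.const_mul (√(2 * π))⁻¹).congr_deriv (by rw [stdPdf]; ring)

theorem stdCdf_sub_stdCdf (a b : ℝ) : stdCdf b - stdCdf a = ∫ t in a..b, stdPdf t :=
  intervalIntegral.integral_Iic_sub_Iic integrable_stdPdf.integrableOn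
    integrable_stdPdf.integrableOn

theorem hasDerivAt_stdCdf (x : ℝ) : HasDerivAt stdCdf (stdPdf x) x := by
  have h : stdCdf = fun y ↦ stdCdf 0 + ∫ t in (0 : ℝ)..y, stdPdf t := by
    ext y; rw [← stdCdf_sub_stdCdf]; ring
  rw [h]
  exact ((continuous_stdPdf.integral_hasStrictDerivAt 0 x).hasDerivAt).const_add _

theorem monotone_stdCdf : Monotone stdCdf :=
  monotone_of_hasDerivAt_nonneg hasDerivAt_stdCdf fun x ↦ (stdPdf_pos x).le

theorem tendsto_stdCdf_atBot : Tendsto stdCdf atBot (𝓝 0) :=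
  tendsto_integral_Iic_zero tendsto_id

theorem tendsto_stdPdf_atBot : Tendsto stdPdf atBot (𝓝 0) := by
  have hsq : Tendsto (fun x : ℝ ↦ -x ^ 2 / 2) atBot atBot :=
    tendsto_atBot_mono' atBot ((eventually_le_atBot (-2)).mono fun x (hx : x ≤ -2) ↦
      show -x ^ 2 / 2 ≤ x by nlinarith) tendsto_id
  have h := (tendsto_exp_atBot.comp hsq).const_mul (√(2 * π))⁻¹
  rwa [mul_zero] at h

theorem stdCdf_zero : stdCdf 0 = 1 / 2 := by
  have hpdf : stdPdf = fun t ↦ (√(2 * π))⁻¹ * exp (-(1 / 2) * t ^ 2) := by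
    ext t; simp only [stdPdf]; ring_nf
  have hhalf : ∫ t in Iic (0 : ℝ), exp (-(1 / 2) * t ^ 2) = √(2 * π) / 2 := by
    have := integral_comp_neg_Ioi 0 fun t : ℝ ↦ exp (-(1 / 2) * t ^ 2)
    simp only [neg_sq, neg_zero] at this
    rw [← this, integral_gaussian_Ioi]; congr 2; ring
  rw [stdCdf, hpdf, integral_const_mul, hhalf]
  field_simp

noncomputable def cdfGap (x : ℝ) : ℝ := stdCdf x - stdPdf x / (2 * stdPdf x - x)

noncomputable def cdfGapSign (x : ℝ) : ℝ := (2 * stdPdf x - x) ^ 2 - (1 + x ^ 2)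

theorem two_mul_stdPdf_sub_pos {x : ℝ} (hx : x ≤ 0) : 0 < 2 * stdPdf x - x := by
  linarith [stdPdf_pos x]

theorem abs_mul_stdPdf_le_one (x : ℝ) : |x| * stdPdf x ≤ 1 := by
  have hc : 1 ≤ √(2 * π) := by
    rw [Real.one_le_sqrt]; nlinarith [pi_gt_three]
  have hx : |x| ≤ exp (x ^ 2 / 2) := by
    nlinarith [add_one_le_exp (x ^ 2 / 2), sq_abs x, sq_nonneg (|x| - 1)]
  have hexp : exp (x ^ 2 / 2) * exp (-x ^ 2 / 2) = 1 := by
    rw [← exp_add]; ring_nf; exact exp_zero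
  have h := sqrt_two_pi_mul_stdPdf x
  nlinarith [stdPdf_pos x, abs_nonneg x, exp_pos (-x ^ 2 / 2)]

theorem hasDerivAt_cdfGap {x : ℝ} (hx : x ≤ 0) :
    HasDerivAt cdfGap (stdPdf x / (2 * stdPdf x - x) ^ 2 * cdfGapSign x) x := by
  have hden := (two_mul_stdPdf_sub_pos hx).ne'
  have h := (hasDerivAt_stdCdf x).fun_sub ((hasDerivAt_stdPdf x).fun_div
    (((hasDerivAt_stdPdf x).const_mul 2).fun_sub (hasDerivAt_id' x)) hden)
  have hnum : -x * stdPdf x * (2 * stdPdf x - x) - stdPdf x * (2 * (-x * stdPdf x) - 1) =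
      stdPdf x * (1 + x ^ 2) := by ring
  refine h.congr_deriv ?_
  rw [hnum, cdfGapSign]
  generalize 2 * stdPdf x - x = D at hden ⊢
  field_simp

theorem hasDerivAt_cdfGapSign (x : ℝ) :
    HasDerivAt cdfGapSign (4 * stdPdf x * (x ^ 2 - 2 * x * stdPdf x - 1)) x := by
  have h := ((((hasDerivAt_stdPdf x).const_mul 2).fun_sub (hasDerivAt_id' x)).pow 2).fun_sub
    ((hasDerivAt_pow 2 x).const_add 1)
  exact h.congr_deriv (by push_cast; ring)

theorem antitoneOn_sq_sub_two_mul_mul_stdPdf :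
    AntitoneOn (fun x ↦ x ^ 2 - 2 * x * stdPdf x - 1) (Iic 0) := by
  have hderiv : ∀ x, HasDerivAt (fun x ↦ x ^ 2 - 2 * x * stdPdf x - 1)
      (2 * x - 2 * (stdPdf x + x * (-x * stdPdf x))) x := fun x ↦ by
    have h := (((hasDerivAt_pow 2 x).fun_sub (((hasDerivAt_id' x).const_mul 2).fun_mul
      (hasDerivAt_stdPdf x))).sub_const 1)
    exact h.congr_deriv (by push_cast; ring)
  refine antitoneOn_of_hasDerivWithinAt_nonpos (convex_Iic 0)
    (fun x _ ↦ (hderiv x).continuousAt.continuousWithinAt)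
    (fun x _ ↦ (hderiv x).hasDerivWithinAt) fun x hx ↦ ?_
  rw [interior_Iic] at hx
  have hx' : x < 0 := hx
  have h := abs_mul_stdPdf_le_one x
  rw [abs_of_neg hx'] at h
  nlinarith [stdPdf_pos x]

theorem quasiconcaveOn_cdfGapSign : QuasiconcaveOn ℝ (Iic 0) cdfGapSign := by
  refine quasiconcaveOn_of_hasDerivAt (convex_Iic 0) (fun x _ ↦ hasDerivAt_cdfGapSign x)
    fun x hx y hy hxy hpos ↦ ?_
  have hy' : 0 < y ^ 2 - 2 * y * stdPdf y - 1 :=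
    pos_of_mul_pos_right hpos (by linarith [stdPdf_pos y])
  have := antitoneOn_sq_sub_two_mul_mul_stdPdf hx hy hxy.le
  exact mul_nonneg (by linarith [stdPdf_pos x]) (by simp only at this; linarith)

theorem convex_setOf_cdfGap_deriv_nonneg :
    Convex ℝ {y ∈ Iic (0 : ℝ) | 0 ≤ stdPdf y / (2 * stdPdf y - y) ^ 2 * cdfGapSign y} := by
  convert quasiconcaveOn_cdfGapSign 0 using 1
  ext y
  refine and_congr_right fun hy ↦ ?_
  have : 0 < stdPdf y / (2 * stdPdf y - y) ^ 2 :=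
    div_pos (stdPdf_pos y) (pow_pos (two_mul_stdPdf_sub_pos hy) 2)
  exact mul_nonneg_iff_of_pos_left this

theorem tendsto_cdfGap_atBot : Tendsto cdfGap atBot (𝓝 0) := by
  have h : Tendsto (fun x ↦ stdPdf x / (2 * stdPdf x - x)) atBot (𝓝 0) := by
    refine squeeze_zero' ?_ ?_ tendsto_stdPdf_atBot
    · filter_upwards [eventually_le_atBot 0] with x hx
      exact div_nonneg (stdPdf_pos x).le (two_mul_stdPdf_sub_pos hx).le
    · filter_upwards [eventually_le_atBot (-1)] with x hx
      exact div_le_self (stdPdf_pos x).le (by linarith [stdPdf_pos x])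
  have := tendsto_stdCdf_atBot.sub h
  rwa [sub_zero] at this

theorem cdfGap_zero : cdfGap 0 = 0 := by
  have := (stdPdf_pos 0).ne'
  rw [cdfGap, stdCdf_zero]
  field_simp
  ring

noncomputable def gaussTaylor (t : ℝ) : ℝ :=
  1 - t ^ 2 / 2 + t ^ 4 / 8 - t ^ 6 / 48 + t ^ 8 / 384 - t ^ 10 / 3840

noncomputable def gaussTaylorPrimitive (a : ℝ) : ℝ :=
  a - a ^ 3 / 6 + a ^ 5 / 40 - a ^ 7 / 336 + a ^ 9 / 3456 - a ^ 11 / 42240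

/-- `7 / 4320 = (n + 1) / (n! n)` is the remainder factor of `Real.exp_bound` at `n = 6`. -/
theorem abs_exp_neg_sq_half_sub_gaussTaylor_le {t : ℝ} (ht : t ^ 2 ≤ 2) :
    |exp (-t ^ 2 / 2) - gaussTaylor t| ≤ (t ^ 2 / 2) ^ 6 * (7 / 4320) := by
  have habs : |(-t ^ 2 / 2 : ℝ)| = t ^ 2 / 2 := by
    rw [abs_of_nonpos (by nlinarith [sq_nonneg t])]; ring
  have h := Real.exp_bound (x := -t ^ 2 / 2) (by rw [habs]; linarith) (by norm_num : 0 < 6)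
  have hsum : ∑ m ∈ Finset.range 6, (-t ^ 2 / 2) ^ m / (m.factorial : ℝ) = gaussTaylor t := by
    simp only [Finset.sum_range_succ, Finset.sum_range_zero, Nat.factorial, gaussTaylor]
    push_cast; ring
  rw [hsum, habs] at h
  convert h using 2; norm_num

theorem hasDerivAt_gaussTaylorPrimitive (s : ℝ) :
    HasDerivAt gaussTaylorPrimitive (gaussTaylor s) s := by
  have h := (((((hasDerivAt_id' s).fun_sub ((hasDerivAt_pow 3 s).div_const 6)).fun_add
    ((hasDerivAt_pow 5 s).div_const 40)).fun_sub ((hasDerivAt_pow 7 s).div_const 336)).fun_add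
    ((hasDerivAt_pow 9 s).div_const 3456)).fun_sub ((hasDerivAt_pow 11 s).div_const 42240)
  exact h.congr_deriv (by rw [gaussTaylor]; push_cast; ring)

theorem abs_integral_exp_neg_sq_half_sub_le {a : ℝ} (ha : 0 ≤ a) (ha2 : a ^ 2 ≤ 2) :
    |(∫ s in -a..0, exp (-s ^ 2 / 2)) - gaussTaylorPrimitive a| ≤
      a * ((a ^ 2 / 2) ^ 6 * (7 / 4320)) := by
  have hcont : Continuous gaussTaylor := by unfold gaussTaylor; fun_prop
  have hpoly : ∫ s in -a..0, gaussTaylor s = gaussTaylorPrimitive a := by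
    rw [intervalIntegral.integral_eq_sub_of_hasDerivAt
      (fun s _ ↦ hasDerivAt_gaussTaylorPrimitive s) (hcont.intervalIntegrable _ _)]
    simp only [gaussTaylorPrimitive]; ring
  have hbound : ∀ s ∈ uIoc (-a) 0, ‖exp (-s ^ 2 / 2) - gaussTaylor s‖ ≤
      (a ^ 2 / 2) ^ 6 * (7 / 4320) := fun s hs ↦ by
    rw [uIoc_of_le (by linarith)] at hs
    have hsa : s ^ 2 ≤ a ^ 2 := by nlinarith [hs.1, hs.2]
    calc ‖exp (-s ^ 2 / 2) - gaussTaylor s‖ ≤ (s ^ 2 / 2) ^ 6 * (7 / 4320) :=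
          abs_exp_neg_sq_half_sub_gaussTaylor_le (hsa.trans ha2)
      _ ≤ (a ^ 2 / 2) ^ 6 * (7 / 4320) := by gcongr
  have hexp : Continuous fun s : ℝ ↦ exp (-s ^ 2 / 2) := by fun_prop
  rw [← hpoly, ← intervalIntegral.integral_sub (hexp.intervalIntegrable _ _)
    (hcont.intervalIntegrable _ _)]
  calc _ ≤ (a ^ 2 / 2) ^ 6 * (7 / 4320) * |0 - -a| :=
        intervalIntegral.norm_integral_le_of_norm_le_const hbound
    _ = a * ((a ^ 2 / 2) ^ 6 * (7 / 4320)) := by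
        rw [sub_neg_eq_add, zero_add, abs_of_nonneg ha]; ring

theorem sqrt_two_pi_gt : 2.5066282 < √(2 * π) := by
  rw [Real.lt_sqrt (by norm_num)]; linarith [pi_gt_d20]

theorem sqrt_two_pi_lt : √(2 * π) < 2.5066283 := by
  rw [Real.sqrt_lt' (by norm_num)]; linarith [pi_lt_d20]

theorem stdCdf_neg_eq (a : ℝ) :
    stdCdf (-a) = 1 / 2 - (∫ s in -a..0, exp (-s ^ 2 / 2)) / √(2 * π) := by
  have h := stdCdf_sub_stdCdf (-a) 0
  simp only [stdPdf, intervalIntegral.integral_const_mul, stdCdf_zero] at h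
  rw [inv_mul_eq_div] at h
  linarith

theorem stdCdf_neg_bounds {a : ℝ} (ha : 0 ≤ a) (ha2 : a ^ 2 ≤ 2) :
    1 / 2 - (gaussTaylorPrimitive a + a * ((a ^ 2 / 2) ^ 6 * (7 / 4320))) / 2.5066282 ≤
      stdCdf (-a) ∧
    stdCdf (-a) ≤
      1 / 2 - (gaussTaylorPrimitive a - a * ((a ^ 2 / 2) ^ 6 * (7 / 4320))) / 2.5066283 := by
  have hI : 0 ≤ ∫ s in -a..0, exp (-s ^ 2 / 2) :=
    intervalIntegral.integral_nonneg (by linarith) fun s _ ↦ (exp_pos _).le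
  have hIQ := abs_le.1 (abs_integral_exp_neg_sq_half_sub_le ha ha2)
  have hc₁ := sqrt_two_pi_gt
  have hc₂ := sqrt_two_pi_lt
  rw [stdCdf_neg_eq]
  generalize ∫ s in -a..0, exp (-s ^ 2 / 2) = I at hI hIQ
  constructor
  · gcongr 1 / 2 - ?_
    calc I / √(2 * π) ≤ I / 2.5066282 := by gcongr
      _ ≤ _ := by gcongr; linarith
  · gcongr 1 / 2 - ?_
    calc _ ≤ I / 2.5066283 := by gcongr; linarith
      _ ≤ I / √(2 * π) := by gcongr

theorem stdPdf_neg_bounds {a : ℝ} (ha2 : a ^ 2 ≤ 2) :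
    (gaussTaylor a - (a ^ 2 / 2) ^ 6 * (7 / 4320)) / 2.5066283 ≤ stdPdf (-a) ∧
    stdPdf (-a) ≤ (gaussTaylor a + (a ^ 2 / 2) ^ 6 * (7 / 4320)) / 2.5066282 := by
  have hφ : stdPdf (-a) = exp (-a ^ 2 / 2) / √(2 * π) := by
    rw [stdPdf, neg_sq, inv_mul_eq_div]
  have hE := abs_le.1 (abs_exp_neg_sq_half_sub_gaussTaylor_le ha2)
  have hc₁ := sqrt_two_pi_gt
  have hc₂ := sqrt_two_pi_lt
  have hexp := (exp_pos (-a ^ 2 / 2)).le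
  rw [hφ]
  constructor
  · calc _ ≤ exp (-a ^ 2 / 2) / 2.5066283 := by gcongr; linarith
      _ ≤ _ := by gcongr
  · calc _ ≤ exp (-a ^ 2 / 2) / 2.5066282 := by gcongr
      _ ≤ _ := by gcongr; linarith

theorem cdfGap_neg_085_neg : cdfGap (-0.85) < 0 := by
  obtain ⟨-, hΦ⟩ := stdCdf_neg_bounds (a := 0.85) (by norm_num) (by norm_num)
  obtain ⟨hφ, -⟩ := stdPdf_neg_bounds (a := 0.85) (by norm_num)
  norm_num [gaussTaylor, gaussTaylorPrimitive] at hΦ hφ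
  rw [cdfGap, sub_neg, lt_div_iff₀ (two_mul_stdPdf_sub_pos (by norm_num))]
  nlinarith

theorem cdfGap_neg_0847_pos : 0 < cdfGap (-0.847) := by
  obtain ⟨hΦ, -⟩ := stdCdf_neg_bounds (a := 0.847) (by norm_num) (by norm_num)
  obtain ⟨-, hφ⟩ := stdPdf_neg_bounds (a := 0.847) (by norm_num)
  norm_num [gaussTaylor, gaussTaylorPrimitive] at hΦ hφ
  rw [cdfGap, sub_pos, div_lt_iff₀ (two_mul_stdPdf_sub_pos (by norm_num))]
  nlinarith [stdPdf_pos (-0.847)]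

/-- Any negative solution `x*` of `-xΦ(x) = φ(x)(1 - 2Φ(x))` satisfies
`x* ∈ (-0.85, -0.84)`, and consequently `q* = Φ(x*) ∈ (0.197, 0.199)`. -/
theorem stmt_11 (x : ℝ) (hx : x < 0)
    (heq : -x * stdCdf x = stdPdf x * (1 - 2 * stdCdf x)) :
    x ∈ Set.Ioo (-0.85 : ℝ) (-0.84) ∧ stdCdf x ∈ Set.Ioo (0.197 : ℝ) 0.199 := by
  have hgap : cdfGap x = 0 := by
    rw [cdfGap, sub_eq_zero, eq_div_iff (two_mul_stdPdf_sub_pos hx.le).ne']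
    linear_combination heq
  obtain ⟨hlo, hhi⟩ := mem_Ioo_of_eq_zero_of_convex_setOf_deriv_nonneg
    (fun y hy ↦ hasDerivAt_cdfGap hy) convex_setOf_cdfGap_deriv_nonneg tendsto_cdfGap_atBot
    cdfGap_zero (by norm_num) cdfGap_neg_085_neg cdfGap_neg_0847_pos hx hgap
  obtain ⟨hΦlo, -⟩ := stdCdf_neg_bounds (a := 0.85) (by norm_num) (by norm_num)
  obtain ⟨-, hΦhi⟩ := stdCdf_neg_bounds (a := 0.847) (by norm_num) (by norm_num)
  norm_num [gaussTaylorPrimitive] at hΦlo hΦhi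
  have hmono₁ := monotone_stdCdf hlo.le
  have hmono₂ := monotone_stdCdf hhi.le
  exact ⟨⟨hlo, by linarith⟩, by linarith, by linarith⟩
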